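/- arXiv:2503.05408 — 2 statements merged into one kernel-verified Lean document; each statement's English description precedes it below -/
import Mathlib

section
/- If G is a directed acyclic graph and P is a partition of its vertex set such that every part of P is a cascade, then the coarsened graph G // P is acyclic. -/
/-!
A cycle of `G // P` lifts to a closed walk of `G`: every coarse edge `U' → W'` is realised by an
edge of `G` leaving `U'` and entering `W'`, and inside each part the cascade property supplies a
walk from the vertex where the lifted walk enters the part to the vertex where it leaves it. This
includes the starting part, where the walk ends and must be joined back to its first vertex.
-/

/-- A subset `U` of vertices is a cascade: for every vertex `v ∈ U` with an incoming
edge from outside `U` and every `u ∈ U` with an outgoing edge leaving `U`,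
there is a (possibly trivial) directed walk from `v` to `u` in `G`. -/
def IsCascade {V : Type*} (E : V → V → Prop) (U : Set V) : Prop :=
  ∀ v ∈ U, ∀ u ∈ U, (∃ w, w ∉ U ∧ E w v) → (∃ w, w ∉ U ∧ E u w) →
    Relation.ReflTransGen E v u

/-- The edge relation of the coarsened graph `G // P`. -/
def coarseEdge {V : Type*} (E : V → V → Prop) (P : Set (Set V))
    (U W : {S // S ∈ P}) : Prop :=
  U ≠ W ∧ ∃ u ∈ U.1, ∃ w ∈ W.1, E u w

section

variable {V : Type*} {E : V → V → Prop} {P : Set (Set V)}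

lemma coarseEdge.exists_crossing_edge (hP : P.PairwiseDisjoint id) {U W : {S // S ∈ P}}
    (h : coarseEdge E P U W) : ∃ u ∈ U.1, ∃ w ∈ W.1, u ∉ W.1 ∧ w ∉ U.1 ∧ E u w := by
  obtain ⟨hne, u, hu, w, hw, he⟩ := h
  have hne' : U.1 ≠ W.1 := Subtype.coe_injective.ne hne
  exact ⟨u, hu, w, hw, fun huW => hne' (hP.elim_set U.2 W.2 u hu huW),
    fun hwU => hne' (hP.elim_set U.2 W.2 w hwU hw), he⟩

lemma exists_transGen_of_transGen_coarseEdge (hP : P.PairwiseDisjoint id)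
    (hcasc : ∀ U ∈ P, IsCascade E U) {U W : {S // S ∈ P}}
    (h : Relation.TransGen (coarseEdge E P) U W) :
    ∃ u ∈ U.1, ∃ w ∈ W.1, (∃ x, x ∉ U.1 ∧ E u x) ∧ (∃ x, x ∉ W.1 ∧ E x w) ∧
      Relation.TransGen E u w := by
  induction h with
  | single h =>
    obtain ⟨u, hu, w, hw, huW, hwU, he⟩ := h.exists_crossing_edge hP
    exact ⟨u, hu, w, hw, ⟨w, hwU, he⟩, ⟨u, huW, he⟩, .single he⟩
  | @tail W' W _ h ih =>
    obtain ⟨u, hu, v, hv, hout, hin, huv⟩ := ih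
    obtain ⟨a, ha, b, hb, haW, hbW', he⟩ := h.exists_crossing_edge hP
    have hva : Relation.ReflTransGen E v a := hcasc W'.1 W'.2 v hv a ha hin ⟨b, hbW', he⟩
    exact ⟨u, hu, b, hb, hout, ⟨a, haW, he⟩, (huv.trans_left hva).tail he⟩

end

theorem stmt0 {V : Type*} (E : V → V → Prop) (P : Set (Set V))
    (hP : Setoid.IsPartition P)
    (hcasc : ∀ U ∈ P, IsCascade E U)
    (hacyc : ∀ v : V, ¬ Relation.TransGen E v v) :
    ∀ U : {S // S ∈ P}, ¬ Relation.TransGen (coarseEdge E P) U U := by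
  intro U hU
  obtain ⟨u, hu, w, hw, hout, hin, huw⟩ :=
    exists_transGen_of_transGen_coarseEdge hP.pairwiseDisjoint hcasc hU
  exact hacyc u (huw.trans_left (hcasc U.1 U.2 w hw u hu hin hout))
end

section
/- Any directed walk in the coarsened graph G // P (where every part of P is a cascade) can be lifted to a directed walk in G: if there is a directed walk in G // P from part U to part W, then there exist vertices u ∈ U and w ∈ W with a directed walk from u to w in G. -/
section

variable {V : Type*} {E : V → V → Prop} {P : Set (Set V)}

theorem coarseEdge.exists_crossing_edge_s1 (hdisj : P.PairwiseDisjoint id) {B C : {S // S ∈ P}}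
    (h : coarseEdge E P B C) : ∃ b ∈ B.1, ∃ c ∈ C.1, b ∉ C.1 ∧ c ∉ B.1 ∧ E b c := by
  obtain ⟨hne, b, hb, c, hc, hbc⟩ := h
  have hBC : Disjoint B.1 C.1 := hdisj B.2 C.2 fun h => hne (Subtype.ext h)
  exact ⟨b, hb, c, hc, Set.disjoint_left.1 hBC hb, Set.disjoint_right.1 hBC hc, hbc⟩

theorem exists_lift_to_entry_of_reflTransGen_coarseEdge (hdisj : P.PairwiseDisjoint id)
    (hcasc : ∀ U ∈ P, IsCascade E U) {U W : {S // S ∈ P}}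
    (h : Relation.ReflTransGen (coarseEdge E P) U W) :
    U = W ∨ ∃ u ∈ U.1, ∃ w ∈ W.1, Relation.ReflTransGen E u w ∧ ∃ z, z ∉ W.1 ∧ E z w := by
  induction h with
  | refl => exact Or.inl rfl
  | @tail B C _ hBC ih =>
    obtain ⟨b, hb, c, hc, hbC, hcB, hbc⟩ := hBC.exists_crossing_edge_s1 hdisj
    right
    rcases ih with rfl | ⟨u, hu, w, hw, huw, z, hzB, hzw⟩
    · exact ⟨b, hb, c, hc, .single hbc, b, hbC, hbc⟩
    · have hwb : Relation.ReflTransGen E w b := hcasc B.1 B.2 w hw b hb ⟨z, hzB, hzw⟩ ⟨c, hcB, hbc⟩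
      exact ⟨u, hu, c, hc, (huw.trans hwb).tail hbc, b, hbC, hbc⟩

end

theorem stmt1 {V : Type*} (E : V → V → Prop) (P : Set (Set V))
    (hP : Setoid.IsPartition P)
    (hcasc : ∀ U ∈ P, IsCascade E U) :
    ∀ U W : {S // S ∈ P}, Relation.ReflTransGen (coarseEdge E P) U W →
      ∃ u ∈ U.1, ∃ w ∈ W.1, Relation.ReflTransGen E u w := by
  intro U W h
  rcases exists_lift_to_entry_of_reflTransGen_coarseEdge hP.pairwiseDisjoint hcasc h with
    rfl | ⟨u, hu, w, hw, huw, -⟩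
  · obtain ⟨u, hu⟩ := Setoid.nonempty_of_mem_partition hP U.2
    exact ⟨u, hu, u, hu, .refl⟩
  · exact ⟨u, hu, w, hw, huw⟩
end
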